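/- Let V be a vector superspace with an even non-degenerate supersymmetric bilinear form g (so g(X,Y) = (−1)^{|X||Y|} g(Y,X), g(V_0̄,V_1̄) = 0) and an even complex structure J ∈ gl(V)_0̄ with J² = −id that is an isometry of g, and let u = { ξ ∈ osp(V,g) : [ξ, J] = 0 }. For any even algebraic curvature tensor R ∈ R(u) (super skew-symmetric with values in u, satisfying the first Bianchi super-identity), the Ricci tensor Ric(R)(Y,Z) = str( X ↦ (−1)^{|X||Z|} R(Y,X)Z ) satisfies Ric(R)(Y,Z) = (1/2) str( J ∘ R(JY, Z) ) for all homogeneous Y, Z ∈ V. -/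
import Mathlib


/-- A vector superspace structure on `V`: a pair of complementary subspaces. -/
structure SuperSpace (k V : Type*) [Field k] [AddCommGroup V] [Module k V] where
  even : Submodule k V
  odd : Submodule k V
  isCompl : IsCompl even odd

variable {k V : Type*} [Field k] [AddCommGroup V] [Module k V]

/-- The subspace of elements of parity `p`. -/
def SuperSpace.part (S : SuperSpace k V) (p : ZMod 2) : Submodule k V :=
  if p = 0 then S.even else S.odd

/-- The sign `(-1)^p`. -/
def sg (k : Type*) [Field k] (p : ZMod 2) : k := if p = 1 then -1 else 1

/-- `A` is a homogeneous endomorphism of parity `p`. -/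
def SuperSpace.HomEnd (S : SuperSpace k V) (p : ZMod 2) (A : Module.End k V) : Prop :=
  ∀ q x, x ∈ S.part q → A x ∈ S.part (q + p)

/-- Supercommutator of endomorphisms of parities `pa`, `pb`. -/
def sbr (pa pb : ZMod 2) (A B : Module.End k V) : Module.End k V :=
  A * B - sg k (pa * pb) • (B * A)

/-- Super skew-symmetry of a bilinear map with operator values. -/
def SuperSkew (S : SuperSpace k V) (R : V →ₗ[k] V →ₗ[k] Module.End k V) : Prop :=
  ∀ p q x y, x ∈ S.part p → y ∈ S.part q → R x y = - sg k (p * q) • R y x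

/-- The first Bianchi super-identity. -/
def Bianchi (S : SuperSpace k V) (R : V →ₗ[k] V →ₗ[k] Module.End k V) : Prop :=
  ∀ p q r x y z, x ∈ S.part p → y ∈ S.part q → z ∈ S.part r →
    R x y z + sg k (p * (q + r)) • R y z x + sg k (r * (p + q)) • R z x y = 0

/-- `R` is an algebraic curvature tensor of type `g`. -/
def CurvOf (S : SuperSpace k V) (g : Submodule k (Module.End k V))
    (R : V →ₗ[k] V →ₗ[k] Module.End k V) : Prop :=
  (∀ x y, R x y ∈ g) ∧ SuperSkew S R ∧ Bianchi S R

/-- `R` is homogeneous of parity `pR`: `R x y` has parity `pR + |x| + |y|`. -/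
def HomCurv (S : SuperSpace k V) (pR : ZMod 2)
    (R : V →ₗ[k] V →ₗ[k] Module.End k V) : Prop :=
  ∀ p q x y, x ∈ S.part p → y ∈ S.part q → S.HomEnd (pR + p + q) (R x y)

/-- The supertrace of an endomorphism with respect to a superspace structure. -/
noncomputable def strE {k V : Type*} [Field k] [AddCommGroup V] [Module k V]
    (S : SuperSpace k V) (A : Module.End k V) : k :=
  LinearMap.trace k S.even
      ((Submodule.linearProjOfIsCompl S.even S.odd S.isCompl) ∘ₗ A ∘ₗ S.even.subtype) -
    LinearMap.trace k S.odd
      ((Submodule.linearProjOfIsCompl S.odd S.even S.isCompl.symm) ∘ₗ A ∘ₗ S.odd.subtype)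

/-- The endomorphism which is the identity on the even part and `c` times the identity on
the odd part.  For `c = (-1)^{|Z|}` it implements the Koszul sign `(-1)^{|X||Z|}`. -/
noncomputable def twist {k V : Type*} [Field k] [AddCommGroup V] [Module k V]
    (S : SuperSpace k V) (c : k) : Module.End k V :=
  S.even.subtype ∘ₗ Submodule.linearProjOfIsCompl S.even S.odd S.isCompl +
    c • (S.odd.subtype ∘ₗ Submodule.linearProjOfIsCompl S.odd S.even S.isCompl.symm)

/-- `ξ` belongs to `osp(V,g)` as an element of parity `pξ`:
`g(ξX,Y) + (−1)^{|ξ||X|} g(X,ξY) = 0`. -/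
def ospCond {k V : Type*} [Field k] [AddCommGroup V] [Module k V]
    (S : SuperSpace k V) (B : V →ₗ[k] V →ₗ[k] k) (pξ : ZMod 2)
    (ξ : Module.End k V) : Prop :=
  ∀ (p : ZMod 2) (x y : V), x ∈ S.part p → B (ξ x) y + sg k (pξ * p) * B x (ξ y) = 0

lemma zmod2_cases (p : ZMod 2) : p = 0 ∨ p = 1 := by revert p; decide

@[simp] lemma sg_zero : sg k 0 = 1 := rfl
@[simp] lemma sg_one : sg k 1 = -1 := rfl
@[simp] lemma sg_two : sg k 2 = 1 := rfl

lemma sg_sq (a : ZMod 2) : sg k a * sg k a = 1 := by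
  rcases zmod2_cases a with h | h <;> subst h <;> simp

lemma sg_mul (a b : ZMod 2) : sg k a * sg k b = sg k (a + b) := by
  have e : ((1:ZMod 2) + 1) = 0 := by decide
  rcases zmod2_cases a with h | h <;> rcases zmod2_cases b with h' | h' <;> rw [h, h']
  · simp
  · simp
  · simp
  · rw [e]; simp

lemma zexp1 : ∀ pa pb pc pd : ZMod 2,
    (pa + pb) * pc + pc * (pd + (0 + pa + pb)) = pc * pd := by decide

section Hex
variable (S : SuperSpace k V) (B : V →ₗ[k] V →ₗ[k] k)
  (R : V →ₗ[k] V →ₗ[k] Module.End k V)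

/-- Bianchi, paired with a vector. -/
lemma HB' (hB : Bianchi S R) (pa pb pc : ZMod 2) (a b c : V)
    (ha : a ∈ S.part pa) (hb : b ∈ S.part pb) (hc : c ∈ S.part pc) (d : V) :
    B (R a b c) d + sg k (pa * (pb + pc)) * B (R b c a) d
      + sg k (pc * (pa + pb)) * B (R c a b) d = 0 := by
  have h := hB pa pb pc a b c ha hb hc
  have := congrArg (fun v => B v d) h
  simpa [map_add, map_smul, smul_eq_mul] using this

/-- first-two skew, paired. -/
lemma HS2' (hskew : SuperSkew S R) (pa pb : ZMod 2) (a b : V)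
    (ha : a ∈ S.part pa) (hb : b ∈ S.part pb) (c d : V) :
    B (R a b c) d + sg k (pa * pb) * B (R b a c) d = 0 := by
  have h := hskew pa pb a b ha hb
  have : R a b c = (-sg k (pa*pb) • R b a) c := by rw [← h]
  simp only [LinearMap.smul_apply, LinearMap.neg_apply, neg_smul] at this
  rw [this]
  simp only [map_neg, map_smul, LinearMap.neg_apply, LinearMap.smul_apply, smul_eq_mul]
  ring

/-- last-two super skew, paired. -/
lemma HS1' (hsymm : ∀ (p q : ZMod 2) (x y : V), x ∈ S.part p → y ∈ S.part q →
      B x y = sg k (p * q) * B y x)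
    (hRhom : HomCurv S 0 R)
    (hosp : ∀ (p q : ZMod 2) (x y : V), x ∈ S.part p → y ∈ S.part q →
      ospCond S B (p + q) (R x y))
    (pa pb pc pd : ZMod 2) (a b c d : V)
    (ha : a ∈ S.part pa) (hb : b ∈ S.part pb) (hc : c ∈ S.part pc) (hd : d ∈ S.part pd) :
    B (R a b c) d + sg k (pc * pd) * B (R a b d) c = 0 := by
  have h1 := hosp pa pb a b ha hb pc c d hc
  have h2 := hsymm pc (pd + (0 + pa + pb)) c (R a b d) hc (hRhom pa pb a b ha hb pd d hd)
  have e1 : sg k ((pa + pb) * pc) * sg k (pc * (pd + (0 + pa + pb))) = sg k (pc * pd) := by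
    rw [sg_mul, zexp1]
  rw [h2, ← mul_assoc, e1] at h1
  linear_combination h1
set_option maxHeartbeats 3000000 in
lemma pair_symm (h2 : (2:k) ≠ 0)
    (hsymm : ∀ (p q : ZMod 2) (x y : V), x ∈ S.part p → y ∈ S.part q →
      B x y = sg k (p * q) * B y x)
    (hskew : SuperSkew S R) (hB : Bianchi S R) (hRhom : HomCurv S 0 R)
    (hosp : ∀ (p q : ZMod 2) (x y : V), x ∈ S.part p → y ∈ S.part q →
      ospCond S B (p + q) (R x y))
    (p q r s : ZMod 2) (x y z w : V)
    (hx : x ∈ S.part p) (hy : y ∈ S.part q) (hz : z ∈ S.part r) (hw : w ∈ S.part s) :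
    B (R x y z) w = sg k ((p + q) * (r + s)) * B (R z w x) y := by
  rcases zmod2_cases p with hp | hp <;> rcases zmod2_cases q with hq | hq <;>
    rcases zmod2_cases r with hr | hr <;> rcases zmod2_cases s with hs0 | hs0 <;>
    subst hp <;> subst hq <;> subst hr <;> subst hs0
  · -- case (0, 0, 0, 0)
    have e1 := HB' S B R hB 0 0 0 x y z hx hy hz w
    have e2 := HB' S B R hB 0 0 0 x y w hx hy hw z
    have e3 := HB' S B R hB 0 0 0 x z w hx hz hw y
    have e4 := HB' S B R hB 0 0 0 y z w hy hz hw x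
    have e5 := HS2' S B R hskew 0 0 x z hx hz y w
    have e6 := HS2' S B R hskew 0 0 x w hx hw y z
    have e7 := HS2' S B R hskew 0 0 x w hx hw z y
    have e8 := HS2' S B R hskew 0 0 y w hy hw z x
    have e9 := HS1' S B R hsymm hRhom hosp 0 0 0 0 x y z w hx hy hz hw
    have e10 := HS1' S B R hsymm hRhom hosp 0 0 0 0 x z y w hx hz hy hw
    have e11 := HS1' S B R hsymm hRhom hosp 0 0 0 0 x w y z hx hw hy hz
    have e12 := HS1' S B R hsymm hRhom hosp 0 0 0 0 y z x w hy hz hx hw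
    have e13 := HS1' S B R hsymm hRhom hosp 0 0 0 0 y w x z hy hw hx hz
    have e14 := HS1' S B R hsymm hRhom hosp 0 0 0 0 z w x y hz hw hx hy
    simp only [show (((0) * (0 + 0) : ZMod 2)) = 0 from by decide, show (((0) * (0) : ZMod 2)) = 0 from by decide, show (((0 + 0) * (0 + 0) : ZMod 2)) = 0 from by decide, sg_zero, sg_one] at e1 e2 e3 e4 e5 e6 e7 e8 e9 e10 e11 e12 e13 e14 ⊢
    have key : (2:k) * (B (R x y z) w - (1:k) * B (R z w x) y) = 0 := by
      linear_combination (1:k) * e1 - (1:k) * e2 - (1:k) * e3 + (1:k) * e4 - (1:k) * e5 + (1:k) * e6 + (1:k) * e7 - (1:k) * e8 + (1:k) * e9 + (1:k) * e10 - (1:k) * e11 - (1:k) * e12 + (1:k) * e13 - (1:k) * e14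
    have hfin := sub_eq_zero.mp ((mul_eq_zero.mp key).resolve_left h2)
    linear_combination hfin
  · -- case (0, 0, 0, 1)
    have e1 := HB' S B R hB 0 0 0 x y z hx hy hz w
    have e2 := HB' S B R hB 0 0 1 x y w hx hy hw z
    have e3 := HB' S B R hB 0 0 1 x z w hx hz hw y
    have e4 := HB' S B R hB 0 0 1 y z w hy hz hw x
    have e5 := HS2' S B R hskew 0 0 x z hx hz y w
    have e6 := HS2' S B R hskew 0 1 x w hx hw y z
    have e7 := HS2' S B R hskew 0 1 x w hx hw z y
    have e8 := HS2' S B R hskew 0 1 y w hy hw z x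
    have e9 := HS1' S B R hsymm hRhom hosp 0 0 0 1 x y z w hx hy hz hw
    have e10 := HS1' S B R hsymm hRhom hosp 0 0 0 1 x z y w hx hz hy hw
    have e11 := HS1' S B R hsymm hRhom hosp 0 1 0 0 x w y z hx hw hy hz
    have e12 := HS1' S B R hsymm hRhom hosp 0 0 0 1 y z x w hy hz hx hw
    have e13 := HS1' S B R hsymm hRhom hosp 0 1 0 0 y w x z hy hw hx hz
    have e14 := HS1' S B R hsymm hRhom hosp 0 1 0 0 z w x y hz hw hx hy
    simp only [show (((0) * (0 + 0) : ZMod 2)) = 0 from by decide, show (((0) * (0 + 1) : ZMod 2)) = 0 from by decide, show (((1) * (0 + 0) : ZMod 2)) = 0 from by decide, show (((0) * (0) : ZMod 2)) = 0 from by decide, show (((0) * (1) : ZMod 2)) = 0 from by decide, show (((0 + 0) * (0 + 1) : ZMod 2)) = 0 from by decide, sg_zero, sg_one] at e1 e2 e3 e4 e5 e6 e7 e8 e9 e10 e11 e12 e13 e14 ⊢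
    have key : (2:k) * (B (R x y z) w - (1:k) * B (R z w x) y) = 0 := by
      linear_combination (1:k) * e1 - (1:k) * e2 - (1:k) * e3 + (1:k) * e4 - (1:k) * e5 + (1:k) * e6 + (1:k) * e7 - (1:k) * e8 + (1:k) * e9 + (1:k) * e10 - (1:k) * e11 - (1:k) * e12 + (1:k) * e13 - (1:k) * e14
    have hfin := sub_eq_zero.mp ((mul_eq_zero.mp key).resolve_left h2)
    linear_combination hfin
  · -- case (0, 0, 1, 0)
    have e1 := HB' S B R hB 0 0 1 x y z hx hy hz w
    have e2 := HB' S B R hB 0 0 0 x y w hx hy hw z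
    have e3 := HB' S B R hB 0 1 0 x z w hx hz hw y
    have e4 := HB' S B R hB 0 1 0 y z w hy hz hw x
    have e5 := HS2' S B R hskew 0 1 x z hx hz y w
    have e6 := HS2' S B R hskew 0 0 x w hx hw y z
    have e7 := HS2' S B R hskew 0 0 x w hx hw z y
    have e8 := HS2' S B R hskew 0 0 y w hy hw z x
    have e9 := HS1' S B R hsymm hRhom hosp 0 0 1 0 x y z w hx hy hz hw
    have e10 := HS1' S B R hsymm hRhom hosp 0 1 0 0 x z y w hx hz hy hw
    have e11 := HS1' S B R hsymm hRhom hosp 0 0 0 1 x w y z hx hw hy hz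
    have e12 := HS1' S B R hsymm hRhom hosp 0 1 0 0 y z x w hy hz hx hw
    have e13 := HS1' S B R hsymm hRhom hosp 0 0 0 1 y w x z hy hw hx hz
    have e14 := HS1' S B R hsymm hRhom hosp 1 0 0 0 z w x y hz hw hx hy
    simp only [show (((0) * (0 + 1) : ZMod 2)) = 0 from by decide, show (((1) * (0 + 0) : ZMod 2)) = 0 from by decide, show (((0) * (0 + 0) : ZMod 2)) = 0 from by decide, show (((0) * (1 + 0) : ZMod 2)) = 0 from by decide, show (((0) * (1) : ZMod 2)) = 0 from by decide, show (((0) * (0) : ZMod 2)) = 0 from by decide, show (((1) * (0) : ZMod 2)) = 0 from by decide, show (((0 + 0) * (1 + 0) : ZMod 2)) = 0 from by decide, sg_zero, sg_one] at e1 e2 e3 e4 e5 e6 e7 e8 e9 e10 e11 e12 e13 e14 ⊢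
    have key : (2:k) * (B (R x y z) w - (1:k) * B (R z w x) y) = 0 := by
      linear_combination (1:k) * e1 - (1:k) * e2 - (1:k) * e3 + (1:k) * e4 - (1:k) * e5 + (1:k) * e6 + (1:k) * e7 - (1:k) * e8 + (1:k) * e9 + (1:k) * e10 - (1:k) * e11 - (1:k) * e12 + (1:k) * e13 - (1:k) * e14
    have hfin := sub_eq_zero.mp ((mul_eq_zero.mp key).resolve_left h2)
    linear_combination hfin
  · -- case (0, 0, 1, 1)
    have e1 := HB' S B R hB 0 0 1 x y z hx hy hz w
    have e2 := HB' S B R hB 0 0 1 x y w hx hy hw z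
    have e3 := HB' S B R hB 0 1 1 x z w hx hz hw y
    have e4 := HB' S B R hB 0 1 1 y z w hy hz hw x
    have e5 := HS2' S B R hskew 0 1 x z hx hz y w
    have e6 := HS2' S B R hskew 0 1 x w hx hw y z
    have e7 := HS2' S B R hskew 0 1 x w hx hw z y
    have e8 := HS2' S B R hskew 0 1 y w hy hw z x
    have e9 := HS1' S B R hsymm hRhom hosp 0 0 1 1 x y z w hx hy hz hw
    have e10 := HS1' S B R hsymm hRhom hosp 0 1 0 1 x z y w hx hz hy hw
    have e11 := HS1' S B R hsymm hRhom hosp 0 1 0 1 x w y z hx hw hy hz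
    have e12 := HS1' S B R hsymm hRhom hosp 0 1 0 1 y z x w hy hz hx hw
    have e13 := HS1' S B R hsymm hRhom hosp 0 1 0 1 y w x z hy hw hx hz
    have e14 := HS1' S B R hsymm hRhom hosp 1 1 0 0 z w x y hz hw hx hy
    simp only [show (((0) * (0 + 1) : ZMod 2)) = 0 from by decide, show (((1) * (0 + 0) : ZMod 2)) = 0 from by decide, show (((0) * (1 + 1) : ZMod 2)) = 0 from by decide, show (((1) * (0 + 1) : ZMod 2)) = 1 from by decide, show (((0) * (1) : ZMod 2)) = 0 from by decide, show (((1) * (1) : ZMod 2)) = 1 from by decide, show (((0) * (0) : ZMod 2)) = 0 from by decide, show (((0 + 0) * (1 + 1) : ZMod 2)) = 0 from by decide, sg_zero, sg_one] at e1 e2 e3 e4 e5 e6 e7 e8 e9 e10 e11 e12 e13 e14 ⊢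
    have key : (2:k) * (B (R x y z) w - (1:k) * B (R z w x) y) = 0 := by
      linear_combination (1:k) * e1 + (1:k) * e2 - (1:k) * e3 + (1:k) * e4 - (1:k) * e5 - (1:k) * e6 - (1:k) * e7 + (1:k) * e8 + (1:k) * e9 + (1:k) * e10 + (1:k) * e11 - (1:k) * e12 - (1:k) * e13 - (1:k) * e14
    have hfin := sub_eq_zero.mp ((mul_eq_zero.mp key).resolve_left h2)
    linear_combination hfin
  · -- case (0, 1, 0, 0)
    have e1 := HB' S B R hB 0 1 0 x y z hx hy hz w
    have e2 := HB' S B R hB 0 1 0 x y w hx hy hw z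
    have e3 := HB' S B R hB 0 0 0 x z w hx hz hw y
    have e4 := HB' S B R hB 1 0 0 y z w hy hz hw x
    have e5 := HS2' S B R hskew 0 0 x z hx hz y w
    have e6 := HS2' S B R hskew 0 0 x w hx hw y z
    have e7 := HS2' S B R hskew 0 0 x w hx hw z y
    have e8 := HS2' S B R hskew 1 0 y w hy hw z x
    have e9 := HS1' S B R hsymm hRhom hosp 0 1 0 0 x y z w hx hy hz hw
    have e10 := HS1' S B R hsymm hRhom hosp 0 0 1 0 x z y w hx hz hy hw
    have e11 := HS1' S B R hsymm hRhom hosp 0 0 1 0 x w y z hx hw hy hz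
    have e12 := HS1' S B R hsymm hRhom hosp 1 0 0 0 y z x w hy hz hx hw
    have e13 := HS1' S B R hsymm hRhom hosp 1 0 0 0 y w x z hy hw hx hz
    have e14 := HS1' S B R hsymm hRhom hosp 0 0 0 1 z w x y hz hw hx hy
    simp only [show (((0) * (1 + 0) : ZMod 2)) = 0 from by decide, show (((0) * (0 + 1) : ZMod 2)) = 0 from by decide, show (((0) * (0 + 0) : ZMod 2)) = 0 from by decide, show (((1) * (0 + 0) : ZMod 2)) = 0 from by decide, show (((0) * (0) : ZMod 2)) = 0 from by decide, show (((1) * (0) : ZMod 2)) = 0 from by decide, show (((0) * (1) : ZMod 2)) = 0 from by decide, show (((0 + 1) * (0 + 0) : ZMod 2)) = 0 from by decide, sg_zero, sg_one] at e1 e2 e3 e4 e5 e6 e7 e8 e9 e10 e11 e12 e13 e14 ⊢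
    have key : (2:k) * (B (R x y z) w - (1:k) * B (R z w x) y) = 0 := by
      linear_combination (1:k) * e1 - (1:k) * e2 - (1:k) * e3 + (1:k) * e4 - (1:k) * e5 + (1:k) * e6 + (1:k) * e7 - (1:k) * e8 + (1:k) * e9 + (1:k) * e10 - (1:k) * e11 - (1:k) * e12 + (1:k) * e13 - (1:k) * e14
    have hfin := sub_eq_zero.mp ((mul_eq_zero.mp key).resolve_left h2)
    linear_combination hfin
  · -- case (0, 1, 0, 1)
    have e1 := HB' S B R hB 0 1 0 x y z hx hy hz w
    have e2 := HB' S B R hB 0 1 1 x y w hx hy hw z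
    have e3 := HB' S B R hB 0 0 1 x z w hx hz hw y
    have e4 := HB' S B R hB 1 0 1 y z w hy hz hw x
    have e5 := HS2' S B R hskew 0 0 x z hx hz y w
    have e6 := HS2' S B R hskew 0 1 x w hx hw y z
    have e7 := HS2' S B R hskew 0 1 x w hx hw z y
    have e8 := HS2' S B R hskew 1 1 y w hy hw z x
    have e9 := HS1' S B R hsymm hRhom hosp 0 1 0 1 x y z w hx hy hz hw
    have e10 := HS1' S B R hsymm hRhom hosp 0 0 1 1 x z y w hx hz hy hw
    have e11 := HS1' S B R hsymm hRhom hosp 0 1 1 0 x w y z hx hw hy hz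
    have e12 := HS1' S B R hsymm hRhom hosp 1 0 0 1 y z x w hy hz hx hw
    have e13 := HS1' S B R hsymm hRhom hosp 1 1 0 0 y w x z hy hw hx hz
    have e14 := HS1' S B R hsymm hRhom hosp 0 1 0 1 z w x y hz hw hx hy
    simp only [show (((0) * (1 + 0) : ZMod 2)) = 0 from by decide, show (((0) * (0 + 1) : ZMod 2)) = 0 from by decide, show (((0) * (1 + 1) : ZMod 2)) = 0 from by decide, show (((1) * (0 + 1) : ZMod 2)) = 1 from by decide, show (((1) * (0 + 0) : ZMod 2)) = 0 from by decide, show (((1) * (1 + 0) : ZMod 2)) = 1 from by decide, show (((0) * (0) : ZMod 2)) = 0 from by decide, show (((0) * (1) : ZMod 2)) = 0 from by decide, show (((1) * (1) : ZMod 2)) = 1 from by decide, show (((1) * (0) : ZMod 2)) = 0 from by decide, show (((0 + 1) * (0 + 1) : ZMod 2)) = 1 from by decide, sg_zero, sg_one] at e1 e2 e3 e4 e5 e6 e7 e8 e9 e10 e11 e12 e13 e14 ⊢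
    have key : (2:k) * (B (R x y z) w - ((-1):k) * B (R z w x) y) = 0 := by
      linear_combination (1:k) * e1 - (1:k) * e2 + (1:k) * e3 + (1:k) * e4 - (1:k) * e5 - (1:k) * e6 - (1:k) * e7 - (1:k) * e8 + (1:k) * e9 + (1:k) * e10 + (1:k) * e11 - (1:k) * e12 + (1:k) * e13 + (1:k) * e14
    have hfin := sub_eq_zero.mp ((mul_eq_zero.mp key).resolve_left h2)
    linear_combination hfin
  · -- case (0, 1, 1, 0)
    have e1 := HB' S B R hB 0 1 1 x y z hx hy hz w
    have e2 := HB' S B R hB 0 1 0 x y w hx hy hw z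
    have e3 := HB' S B R hB 0 1 0 x z w hx hz hw y
    have e4 := HB' S B R hB 1 1 0 y z w hy hz hw x
    have e5 := HS2' S B R hskew 0 1 x z hx hz y w
    have e6 := HS2' S B R hskew 0 0 x w hx hw y z
    have e7 := HS2' S B R hskew 0 0 x w hx hw z y
    have e8 := HS2' S B R hskew 1 0 y w hy hw z x
    have e9 := HS1' S B R hsymm hRhom hosp 0 1 1 0 x y z w hx hy hz hw
    have e10 := HS1' S B R hsymm hRhom hosp 0 1 1 0 x z y w hx hz hy hw
    have e11 := HS1' S B R hsymm hRhom hosp 0 0 1 1 x w y z hx hw hy hz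
    have e12 := HS1' S B R hsymm hRhom hosp 1 1 0 0 y z x w hy hz hx hw
    have e13 := HS1' S B R hsymm hRhom hosp 1 0 0 1 y w x z hy hw hx hz
    have e14 := HS1' S B R hsymm hRhom hosp 1 0 0 1 z w x y hz hw hx hy
    simp only [show (((0) * (1 + 1) : ZMod 2)) = 0 from by decide, show (((1) * (0 + 1) : ZMod 2)) = 1 from by decide, show (((0) * (1 + 0) : ZMod 2)) = 0 from by decide, show (((0) * (0 + 1) : ZMod 2)) = 0 from by decide, show (((1) * (1 + 0) : ZMod 2)) = 1 from by decide, show (((0) * (1) : ZMod 2)) = 0 from by decide, show (((0) * (0) : ZMod 2)) = 0 from by decide, show (((1) * (0) : ZMod 2)) = 0 from by decide, show (((1) * (1) : ZMod 2)) = 1 from by decide, show (((0 + 1) * (1 + 0) : ZMod 2)) = 1 from by decide, sg_zero, sg_one] at e1 e2 e3 e4 e5 e6 e7 e8 e9 e10 e11 e12 e13 e14 ⊢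
    have key : (2:k) * (B (R x y z) w - ((-1):k) * B (R z w x) y) = 0 := by
      linear_combination (1:k) * e1 - (1:k) * e2 + (1:k) * e3 + (1:k) * e4 + (1:k) * e5 + (1:k) * e6 - (1:k) * e7 - (1:k) * e8 + (1:k) * e9 - (1:k) * e10 - (1:k) * e11 - (1:k) * e12 + (1:k) * e13 + (1:k) * e14
    have hfin := sub_eq_zero.mp ((mul_eq_zero.mp key).resolve_left h2)
    linear_combination hfin
  · -- case (0, 1, 1, 1)
    have e1 := HB' S B R hB 0 1 1 x y z hx hy hz w
    have e2 := HB' S B R hB 0 1 1 x y w hx hy hw z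
    have e3 := HB' S B R hB 0 1 1 x z w hx hz hw y
    have e4 := HB' S B R hB 1 1 1 y z w hy hz hw x
    have e5 := HS2' S B R hskew 0 1 x z hx hz y w
    have e6 := HS2' S B R hskew 0 1 x w hx hw y z
    have e7 := HS2' S B R hskew 0 1 x w hx hw z y
    have e8 := HS2' S B R hskew 1 1 y w hy hw z x
    have e9 := HS1' S B R hsymm hRhom hosp 0 1 1 1 x y z w hx hy hz hw
    have e10 := HS1' S B R hsymm hRhom hosp 0 1 1 1 x z y w hx hz hy hw
    have e11 := HS1' S B R hsymm hRhom hosp 0 1 1 1 x w y z hx hw hy hz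
    have e12 := HS1' S B R hsymm hRhom hosp 1 1 0 1 y z x w hy hz hx hw
    have e13 := HS1' S B R hsymm hRhom hosp 1 1 0 1 y w x z hy hw hx hz
    have e14 := HS1' S B R hsymm hRhom hosp 1 1 0 1 z w x y hz hw hx hy
    simp only [show (((0) * (1 + 1) : ZMod 2)) = 0 from by decide, show (((1) * (0 + 1) : ZMod 2)) = 1 from by decide, show (((1) * (1 + 1) : ZMod 2)) = 0 from by decide, show (((0) * (1) : ZMod 2)) = 0 from by decide, show (((1) * (1) : ZMod 2)) = 1 from by decide, show (((0 + 1) * (1 + 1) : ZMod 2)) = 0 from by decide, sg_zero, sg_one] at e1 e2 e3 e4 e5 e6 e7 e8 e9 e10 e11 e12 e13 e14 ⊢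
    have key : (2:k) * (B (R x y z) w - (1:k) * B (R z w x) y) = 0 := by
      linear_combination (1:k) * e1 + (1:k) * e2 - (1:k) * e3 + (1:k) * e4 + (1:k) * e5 + (1:k) * e6 - (1:k) * e7 + (1:k) * e8 + (1:k) * e9 - (1:k) * e10 - (1:k) * e11 - (1:k) * e12 - (1:k) * e13 - (1:k) * e14
    have hfin := sub_eq_zero.mp ((mul_eq_zero.mp key).resolve_left h2)
    linear_combination hfin
  · -- case (1, 0, 0, 0)
    have e1 := HB' S B R hB 1 0 0 x y z hx hy hz w
    have e2 := HB' S B R hB 1 0 0 x y w hx hy hw z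
    have e3 := HB' S B R hB 1 0 0 x z w hx hz hw y
    have e4 := HB' S B R hB 0 0 0 y z w hy hz hw x
    have e5 := HS2' S B R hskew 1 0 x z hx hz y w
    have e6 := HS2' S B R hskew 1 0 x w hx hw y z
    have e7 := HS2' S B R hskew 1 0 x w hx hw z y
    have e8 := HS2' S B R hskew 0 0 y w hy hw z x
    have e9 := HS1' S B R hsymm hRhom hosp 1 0 0 0 x y z w hx hy hz hw
    have e10 := HS1' S B R hsymm hRhom hosp 1 0 0 0 x z y w hx hz hy hw
    have e11 := HS1' S B R hsymm hRhom hosp 1 0 0 0 x w y z hx hw hy hz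
    have e12 := HS1' S B R hsymm hRhom hosp 0 0 1 0 y z x w hy hz hx hw
    have e13 := HS1' S B R hsymm hRhom hosp 0 0 1 0 y w x z hy hw hx hz
    have e14 := HS1' S B R hsymm hRhom hosp 0 0 1 0 z w x y hz hw hx hy
    simp only [show (((1) * (0 + 0) : ZMod 2)) = 0 from by decide, show (((0) * (1 + 0) : ZMod 2)) = 0 from by decide, show (((0) * (0 + 0) : ZMod 2)) = 0 from by decide, show (((1) * (0) : ZMod 2)) = 0 from by decide, show (((0) * (0) : ZMod 2)) = 0 from by decide, show (((1 + 0) * (0 + 0) : ZMod 2)) = 0 from by decide, sg_zero, sg_one] at e1 e2 e3 e4 e5 e6 e7 e8 e9 e10 e11 e12 e13 e14 ⊢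
    have key : (2:k) * (B (R x y z) w - (1:k) * B (R z w x) y) = 0 := by
      linear_combination (1:k) * e1 - (1:k) * e2 - (1:k) * e3 + (1:k) * e4 - (1:k) * e5 + (1:k) * e6 + (1:k) * e7 - (1:k) * e8 + (1:k) * e9 + (1:k) * e10 - (1:k) * e11 - (1:k) * e12 + (1:k) * e13 - (1:k) * e14
    have hfin := sub_eq_zero.mp ((mul_eq_zero.mp key).resolve_left h2)
    linear_combination hfin
  · -- case (1, 0, 0, 1)
    have e1 := HB' S B R hB 1 0 0 x y z hx hy hz w
    have e2 := HB' S B R hB 1 0 1 x y w hx hy hw z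
    have e3 := HB' S B R hB 1 0 1 x z w hx hz hw y
    have e4 := HB' S B R hB 0 0 1 y z w hy hz hw x
    have e5 := HS2' S B R hskew 1 0 x z hx hz y w
    have e6 := HS2' S B R hskew 1 1 x w hx hw y z
    have e7 := HS2' S B R hskew 1 1 x w hx hw z y
    have e8 := HS2' S B R hskew 0 1 y w hy hw z x
    have e9 := HS1' S B R hsymm hRhom hosp 1 0 0 1 x y z w hx hy hz hw
    have e10 := HS1' S B R hsymm hRhom hosp 1 0 0 1 x z y w hx hz hy hw
    have e11 := HS1' S B R hsymm hRhom hosp 1 1 0 0 x w y z hx hw hy hz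
    have e12 := HS1' S B R hsymm hRhom hosp 0 0 1 1 y z x w hy hz hx hw
    have e13 := HS1' S B R hsymm hRhom hosp 0 1 1 0 y w x z hy hw hx hz
    have e14 := HS1' S B R hsymm hRhom hosp 0 1 1 0 z w x y hz hw hx hy
    simp only [show (((1) * (0 + 0) : ZMod 2)) = 0 from by decide, show (((0) * (1 + 0) : ZMod 2)) = 0 from by decide, show (((1) * (0 + 1) : ZMod 2)) = 1 from by decide, show (((1) * (1 + 0) : ZMod 2)) = 1 from by decide, show (((0) * (0 + 1) : ZMod 2)) = 0 from by decide, show (((1) * (0) : ZMod 2)) = 0 from by decide, show (((1) * (1) : ZMod 2)) = 1 from by decide, show (((0) * (1) : ZMod 2)) = 0 from by decide, show (((0) * (0) : ZMod 2)) = 0 from by decide, show (((1 + 0) * (0 + 1) : ZMod 2)) = 1 from by decide, sg_zero, sg_one] at e1 e2 e3 e4 e5 e6 e7 e8 e9 e10 e11 e12 e13 e14 ⊢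
    have key : (2:k) * (B (R x y z) w - ((-1):k) * B (R z w x) y) = 0 := by
      linear_combination (1:k) * e1 - (1:k) * e2 - (1:k) * e3 - (1:k) * e4 - (1:k) * e5 + (1:k) * e6 + (1:k) * e7 + (1:k) * e8 + (1:k) * e9 + (1:k) * e10 - (1:k) * e11 - (1:k) * e12 - (1:k) * e13 + (1:k) * e14
    have hfin := sub_eq_zero.mp ((mul_eq_zero.mp key).resolve_left h2)
    linear_combination hfin
  · -- case (1, 0, 1, 0)
    have e1 := HB' S B R hB 1 0 1 x y z hx hy hz w
    have e2 := HB' S B R hB 1 0 0 x y w hx hy hw z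
    have e3 := HB' S B R hB 1 1 0 x z w hx hz hw y
    have e4 := HB' S B R hB 0 1 0 y z w hy hz hw x
    have e5 := HS2' S B R hskew 1 1 x z hx hz y w
    have e6 := HS2' S B R hskew 1 0 x w hx hw y z
    have e7 := HS2' S B R hskew 1 0 x w hx hw z y
    have e8 := HS2' S B R hskew 0 0 y w hy hw z x
    have e9 := HS1' S B R hsymm hRhom hosp 1 0 1 0 x y z w hx hy hz hw
    have e10 := HS1' S B R hsymm hRhom hosp 1 1 0 0 x z y w hx hz hy hw
    have e11 := HS1' S B R hsymm hRhom hosp 1 0 0 1 x w y z hx hw hy hz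
    have e12 := HS1' S B R hsymm hRhom hosp 0 1 1 0 y z x w hy hz hx hw
    have e13 := HS1' S B R hsymm hRhom hosp 0 0 1 1 y w x z hy hw hx hz
    have e14 := HS1' S B R hsymm hRhom hosp 1 0 1 0 z w x y hz hw hx hy
    simp only [show (((1) * (0 + 1) : ZMod 2)) = 1 from by decide, show (((1) * (1 + 0) : ZMod 2)) = 1 from by decide, show (((1) * (0 + 0) : ZMod 2)) = 0 from by decide, show (((0) * (1 + 0) : ZMod 2)) = 0 from by decide, show (((0) * (1 + 1) : ZMod 2)) = 0 from by decide, show (((0) * (0 + 1) : ZMod 2)) = 0 from by decide, show (((1) * (1) : ZMod 2)) = 1 from by decide, show (((1) * (0) : ZMod 2)) = 0 from by decide, show (((0) * (0) : ZMod 2)) = 0 from by decide, show (((0) * (1) : ZMod 2)) = 0 from by decide, show (((1 + 0) * (1 + 0) : ZMod 2)) = 1 from by decide, sg_zero, sg_one] at e1 e2 e3 e4 e5 e6 e7 e8 e9 e10 e11 e12 e13 e14 ⊢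
    have key : (2:k) * (B (R x y z) w - ((-1):k) * B (R z w x) y) = 0 := by
      linear_combination (1:k) * e1 - (1:k) * e2 - (1:k) * e3 - (1:k) * e4 - (1:k) * e5 + (1:k) * e6 + (1:k) * e7 + (1:k) * e8 + (1:k) * e9 + (1:k) * e10 - (1:k) * e11 + (1:k) * e12 + (1:k) * e13 + (1:k) * e14
    have hfin := sub_eq_zero.mp ((mul_eq_zero.mp key).resolve_left h2)
    linear_combination hfin
  · -- case (1, 0, 1, 1)
    have e1 := HB' S B R hB 1 0 1 x y z hx hy hz w
    have e2 := HB' S B R hB 1 0 1 x y w hx hy hw z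
    have e3 := HB' S B R hB 1 1 1 x z w hx hz hw y
    have e4 := HB' S B R hB 0 1 1 y z w hy hz hw x
    have e5 := HS2' S B R hskew 1 1 x z hx hz y w
    have e6 := HS2' S B R hskew 1 1 x w hx hw y z
    have e7 := HS2' S B R hskew 1 1 x w hx hw z y
    have e8 := HS2' S B R hskew 0 1 y w hy hw z x
    have e9 := HS1' S B R hsymm hRhom hosp 1 0 1 1 x y z w hx hy hz hw
    have e10 := HS1' S B R hsymm hRhom hosp 1 1 0 1 x z y w hx hz hy hw
    have e11 := HS1' S B R hsymm hRhom hosp 1 1 0 1 x w y z hx hw hy hz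
    have e12 := HS1' S B R hsymm hRhom hosp 0 1 1 1 y z x w hy hz hx hw
    have e13 := HS1' S B R hsymm hRhom hosp 0 1 1 1 y w x z hy hw hx hz
    have e14 := HS1' S B R hsymm hRhom hosp 1 1 1 0 z w x y hz hw hx hy
    simp only [show (((1) * (0 + 1) : ZMod 2)) = 1 from by decide, show (((1) * (1 + 0) : ZMod 2)) = 1 from by decide, show (((1) * (1 + 1) : ZMod 2)) = 0 from by decide, show (((0) * (1 + 1) : ZMod 2)) = 0 from by decide, show (((1) * (1) : ZMod 2)) = 1 from by decide, show (((0) * (1) : ZMod 2)) = 0 from by decide, show (((1) * (0) : ZMod 2)) = 0 from by decide, show (((1 + 0) * (1 + 1) : ZMod 2)) = 0 from by decide, sg_zero, sg_one] at e1 e2 e3 e4 e5 e6 e7 e8 e9 e10 e11 e12 e13 e14 ⊢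
    have key : (2:k) * (B (R x y z) w - (1:k) * B (R z w x) y) = 0 := by
      linear_combination (1:k) * e1 + (1:k) * e2 - (1:k) * e3 + (1:k) * e4 - (1:k) * e5 - (1:k) * e6 - (1:k) * e7 + (1:k) * e8 + (1:k) * e9 + (1:k) * e10 + (1:k) * e11 + (1:k) * e12 + (1:k) * e13 - (1:k) * e14
    have hfin := sub_eq_zero.mp ((mul_eq_zero.mp key).resolve_left h2)
    linear_combination hfin
  · -- case (1, 1, 0, 0)
    have e1 := HB' S B R hB 1 1 0 x y z hx hy hz w
    have e2 := HB' S B R hB 1 1 0 x y w hx hy hw z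
    have e3 := HB' S B R hB 1 0 0 x z w hx hz hw y
    have e4 := HB' S B R hB 1 0 0 y z w hy hz hw x
    have e5 := HS2' S B R hskew 1 0 x z hx hz y w
    have e6 := HS2' S B R hskew 1 0 x w hx hw y z
    have e7 := HS2' S B R hskew 1 0 x w hx hw z y
    have e8 := HS2' S B R hskew 1 0 y w hy hw z x
    have e9 := HS1' S B R hsymm hRhom hosp 1 1 0 0 x y z w hx hy hz hw
    have e10 := HS1' S B R hsymm hRhom hosp 1 0 1 0 x z y w hx hz hy hw
    have e11 := HS1' S B R hsymm hRhom hosp 1 0 1 0 x w y z hx hw hy hz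
    have e12 := HS1' S B R hsymm hRhom hosp 1 0 1 0 y z x w hy hz hx hw
    have e13 := HS1' S B R hsymm hRhom hosp 1 0 1 0 y w x z hy hw hx hz
    have e14 := HS1' S B R hsymm hRhom hosp 0 0 1 1 z w x y hz hw hx hy
    simp only [show (((1) * (1 + 0) : ZMod 2)) = 1 from by decide, show (((0) * (1 + 1) : ZMod 2)) = 0 from by decide, show (((1) * (0 + 0) : ZMod 2)) = 0 from by decide, show (((0) * (1 + 0) : ZMod 2)) = 0 from by decide, show (((1) * (0) : ZMod 2)) = 0 from by decide, show (((0) * (0) : ZMod 2)) = 0 from by decide, show (((1) * (1) : ZMod 2)) = 1 from by decide, show (((1 + 1) * (0 + 0) : ZMod 2)) = 0 from by decide, sg_zero, sg_one] at e1 e2 e3 e4 e5 e6 e7 e8 e9 e10 e11 e12 e13 e14 ⊢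
    have key : (2:k) * (B (R x y z) w - (1:k) * B (R z w x) y) = 0 := by
      linear_combination (1:k) * e1 - (1:k) * e2 - (1:k) * e3 - (1:k) * e4 - (1:k) * e5 + (1:k) * e6 + (1:k) * e7 + (1:k) * e8 + (1:k) * e9 + (1:k) * e10 - (1:k) * e11 + (1:k) * e12 - (1:k) * e13 - (1:k) * e14
    have hfin := sub_eq_zero.mp ((mul_eq_zero.mp key).resolve_left h2)
    linear_combination hfin
  · -- case (1, 1, 0, 1)
    have e1 := HB' S B R hB 1 1 0 x y z hx hy hz w
    have e2 := HB' S B R hB 1 1 1 x y w hx hy hw z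
    have e3 := HB' S B R hB 1 0 1 x z w hx hz hw y
    have e4 := HB' S B R hB 1 0 1 y z w hy hz hw x
    have e5 := HS2' S B R hskew 1 0 x z hx hz y w
    have e6 := HS2' S B R hskew 1 1 x w hx hw y z
    have e7 := HS2' S B R hskew 1 1 x w hx hw z y
    have e8 := HS2' S B R hskew 1 1 y w hy hw z x
    have e9 := HS1' S B R hsymm hRhom hosp 1 1 0 1 x y z w hx hy hz hw
    have e10 := HS1' S B R hsymm hRhom hosp 1 0 1 1 x z y w hx hz hy hw
    have e11 := HS1' S B R hsymm hRhom hosp 1 1 1 0 x w y z hx hw hy hz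
    have e12 := HS1' S B R hsymm hRhom hosp 1 0 1 1 y z x w hy hz hx hw
    have e13 := HS1' S B R hsymm hRhom hosp 1 1 1 0 y w x z hy hw hx hz
    have e14 := HS1' S B R hsymm hRhom hosp 0 1 1 1 z w x y hz hw hx hy
    simp only [show (((1) * (1 + 0) : ZMod 2)) = 1 from by decide, show (((0) * (1 + 1) : ZMod 2)) = 0 from by decide, show (((1) * (1 + 1) : ZMod 2)) = 0 from by decide, show (((1) * (0 + 1) : ZMod 2)) = 1 from by decide, show (((1) * (0) : ZMod 2)) = 0 from by decide, show (((1) * (1) : ZMod 2)) = 1 from by decide, show (((0) * (1) : ZMod 2)) = 0 from by decide, show (((1 + 1) * (0 + 1) : ZMod 2)) = 0 from by decide, sg_zero, sg_one] at e1 e2 e3 e4 e5 e6 e7 e8 e9 e10 e11 e12 e13 e14 ⊢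
    have key : (2:k) * (B (R x y z) w - (1:k) * B (R z w x) y) = 0 := by
      linear_combination (1:k) * e1 - (1:k) * e2 + (1:k) * e3 + (1:k) * e4 - (1:k) * e5 - (1:k) * e6 - (1:k) * e7 - (1:k) * e8 + (1:k) * e9 + (1:k) * e10 + (1:k) * e11 + (1:k) * e12 + (1:k) * e13 - (1:k) * e14
    have hfin := sub_eq_zero.mp ((mul_eq_zero.mp key).resolve_left h2)
    linear_combination hfin
  · -- case (1, 1, 1, 0)
    have e1 := HB' S B R hB 1 1 1 x y z hx hy hz w
    have e2 := HB' S B R hB 1 1 0 x y w hx hy hw z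
    have e3 := HB' S B R hB 1 1 0 x z w hx hz hw y
    have e4 := HB' S B R hB 1 1 0 y z w hy hz hw x
    have e5 := HS2' S B R hskew 1 1 x z hx hz y w
    have e6 := HS2' S B R hskew 1 0 x w hx hw y z
    have e7 := HS2' S B R hskew 1 0 x w hx hw z y
    have e8 := HS2' S B R hskew 1 0 y w hy hw z x
    have e9 := HS1' S B R hsymm hRhom hosp 1 1 1 0 x y z w hx hy hz hw
    have e10 := HS1' S B R hsymm hRhom hosp 1 1 1 0 x z y w hx hz hy hw
    have e11 := HS1' S B R hsymm hRhom hosp 1 0 1 1 x w y z hx hw hy hz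
    have e12 := HS1' S B R hsymm hRhom hosp 1 1 1 0 y z x w hy hz hx hw
    have e13 := HS1' S B R hsymm hRhom hosp 1 0 1 1 y w x z hy hw hx hz
    have e14 := HS1' S B R hsymm hRhom hosp 1 0 1 1 z w x y hz hw hx hy
    simp only [show (((1) * (1 + 1) : ZMod 2)) = 0 from by decide, show (((1) * (1 + 0) : ZMod 2)) = 1 from by decide, show (((0) * (1 + 1) : ZMod 2)) = 0 from by decide, show (((1) * (1) : ZMod 2)) = 1 from by decide, show (((1) * (0) : ZMod 2)) = 0 from by decide, show (((1 + 1) * (1 + 0) : ZMod 2)) = 0 from by decide, sg_zero, sg_one] at e1 e2 e3 e4 e5 e6 e7 e8 e9 e10 e11 e12 e13 e14 ⊢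
    have key : (2:k) * (B (R x y z) w - (1:k) * B (R z w x) y) = 0 := by
      linear_combination (1:k) * e1 - (1:k) * e2 + (1:k) * e3 + (1:k) * e4 + (1:k) * e5 + (1:k) * e6 - (1:k) * e7 - (1:k) * e8 + (1:k) * e9 - (1:k) * e10 - (1:k) * e11 - (1:k) * e12 - (1:k) * e13 - (1:k) * e14
    have hfin := sub_eq_zero.mp ((mul_eq_zero.mp key).resolve_left h2)
    linear_combination hfin
  · -- case (1, 1, 1, 1)
    have e1 := HB' S B R hB 1 1 1 x y z hx hy hz w
    have e2 := HB' S B R hB 1 1 1 x y w hx hy hw z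
    have e3 := HB' S B R hB 1 1 1 x z w hx hz hw y
    have e4 := HB' S B R hB 1 1 1 y z w hy hz hw x
    have e5 := HS2' S B R hskew 1 1 x z hx hz y w
    have e6 := HS2' S B R hskew 1 1 x w hx hw y z
    have e7 := HS2' S B R hskew 1 1 x w hx hw z y
    have e8 := HS2' S B R hskew 1 1 y w hy hw z x
    have e9 := HS1' S B R hsymm hRhom hosp 1 1 1 1 x y z w hx hy hz hw
    have e10 := HS1' S B R hsymm hRhom hosp 1 1 1 1 x z y w hx hz hy hw
    have e11 := HS1' S B R hsymm hRhom hosp 1 1 1 1 x w y z hx hw hy hz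
    have e12 := HS1' S B R hsymm hRhom hosp 1 1 1 1 y z x w hy hz hx hw
    have e13 := HS1' S B R hsymm hRhom hosp 1 1 1 1 y w x z hy hw hx hz
    have e14 := HS1' S B R hsymm hRhom hosp 1 1 1 1 z w x y hz hw hx hy
    simp only [show (((1) * (1 + 1) : ZMod 2)) = 0 from by decide, show (((1) * (1) : ZMod 2)) = 1 from by decide, show (((1 + 1) * (1 + 1) : ZMod 2)) = 0 from by decide, sg_zero, sg_one] at e1 e2 e3 e4 e5 e6 e7 e8 e9 e10 e11 e12 e13 e14 ⊢
    have key : (2:k) * (B (R x y z) w - (1:k) * B (R z w x) y) = 0 := by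
      linear_combination (1:k) * e1 + (1:k) * e2 - (1:k) * e3 - (1:k) * e4 + (1:k) * e5 + (1:k) * e6 - (1:k) * e7 - (1:k) * e8 + (1:k) * e9 - (1:k) * e10 - (1:k) * e11 - (1:k) * e12 - (1:k) * e13 - (1:k) * e14
    have hfin := sub_eq_zero.mp ((mul_eq_zero.mp key).resolve_left h2)
    linear_combination hfin

end Hex

section
variable {k V : Type*} [Field k] [AddCommGroup V] [Module k V]

lemma trace_dualMap' [FiniteDimensional k V] (f : Module.End k V) :
    LinearMap.trace k (Module.Dual k V) (f.dualMap) = LinearMap.trace k V f := by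
  classical
  let b := Module.finBasis k V
  rw [LinearMap.trace_eq_matrix_trace k b.dualBasis, LinearMap.dualMap_def,
    LinearMap.toMatrix_transpose, Matrix.trace_transpose,
    ← LinearMap.trace_eq_matrix_trace k b]

lemma trace_bridge [FiniteDimensional k V] (B : V →ₗ[k] V →ₗ[k] k)
    (hinj : ∀ x : V, (∀ y, B x y = 0) → x = 0)
    (e M E : Module.End k V)
    (hBe1 : ∀ x y : V, B y x = B (e x) y)
    (hBe2 : ∀ x y : V, B (e x) y = B x (e y))
    (hME : ∀ x y : V, B (M x) y = B (E y) x) :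
    LinearMap.trace k V M = LinearMap.trace k V (e ∘ₗ E) := by
  classical
  have hBinj : Function.Injective (B : V →ₗ[k] Module.Dual k V) := by
    rw [injective_iff_map_eq_zero]
    intro x hx
    exact hinj x (fun y => by simp [hx])
  have hsurj : Function.Surjective (B : V →ₗ[k] Module.Dual k V) :=
    (LinearMap.injective_iff_surjective_of_finrank_eq_finrank
      (Subspace.dual_finrank_eq (K := k) (V := V)).symm).mp hBinj
  let Ψ : V ≃ₗ[k] Module.Dual k V := LinearEquiv.ofBijective B ⟨hBinj, hsurj⟩
  -- Ψ ∘ M = dualMap E ∘ Ψ ∘ e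
  have key : (Ψ : V →ₗ[k] Module.Dual k V) ∘ₗ M
      = E.dualMap ∘ₗ (Ψ : V →ₗ[k] Module.Dual k V) ∘ₗ e := by
    ext x y
    simp only [LinearMap.comp_apply, LinearMap.dualMap_apply]
    show B (M x) y = B (e x) (E y)
    rw [hME x y, hBe1 x (E y)]
  have hMconj : M = (Ψ.symm : Module.Dual k V →ₗ[k] V) ∘ₗ
      (E.dualMap ∘ₗ (Ψ : V →ₗ[k] Module.Dual k V) ∘ₗ e) := by
    rw [← key]; ext x; simp [Ψ]
  have hPsie : (Ψ : V →ₗ[k] Module.Dual k V) ∘ₗ e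
      = e.dualMap ∘ₗ (Ψ : V →ₗ[k] Module.Dual k V) := by
    ext x y
    show B (e x) y = B x (e y)
    exact hBe2 x y
  calc LinearMap.trace k V M
      = LinearMap.trace k (Module.Dual k V)
        ((E.dualMap ∘ₗ (Ψ : V →ₗ[k] Module.Dual k V) ∘ₗ e) ∘ₗ
          (Ψ.symm : Module.Dual k V →ₗ[k] V)) := by
        rw [hMconj, LinearMap.trace_comp_comm']
    _ = LinearMap.trace k (Module.Dual k V) ((e ∘ₗ E).dualMap) := by
        congr 1
        rw [LinearMap.comp_assoc, hPsie]
        rw [LinearMap.comp_assoc]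
        have : (Ψ : V →ₗ[k] Module.Dual k V) ∘ₗ (Ψ.symm : Module.Dual k V →ₗ[k] V)
            = LinearMap.id := by ext φ; simp [Ψ]
        rw [this, LinearMap.comp_id, LinearMap.dualMap_comp_dualMap]
    _ = LinearMap.trace k V (e ∘ₗ E) := trace_dualMap' _
end
section Infra
variable {k V : Type*} [Field k] [AddCommGroup V] [Module k V]


variable (S : SuperSpace k V)

lemma part_zero' : S.part 0 = S.even := rfl
lemma part_one' : S.part 1 = S.odd := by simp [SuperSpace.part]

lemma decomp (x : V) : ∃ a b, a ∈ S.part 0 ∧ b ∈ S.part 1 ∧ x = a + b := by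
  refine ⟨_, _, ?_, ?_, (Submodule.projection_add_projection_eq_self S.isCompl x).symm⟩
  · rw [part_zero']; exact (S.even.linearProjOfIsCompl S.odd S.isCompl x).2
  · rw [part_one']; exact (S.odd.linearProjOfIsCompl S.even S.isCompl.symm x).2

lemma tw_part0 (c : k) {x : V} (hx : x ∈ S.part 0) : twist S c x = x := by
  rw [part_zero'] at hx
  have h1 : Submodule.linearProjOfIsCompl S.even S.odd S.isCompl x = ⟨x, hx⟩ :=
    Submodule.linearProjOfIsCompl_apply_left S.isCompl ⟨x, hx⟩
  have h2 : Submodule.linearProjOfIsCompl S.odd S.even S.isCompl.symm x = 0 :=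
    Submodule.linearProjOfIsCompl_apply_right S.isCompl.symm ⟨x, hx⟩
  simp [twist, h1, h2]

lemma tw_part1 (c : k) {x : V} (hx : x ∈ S.part 1) : twist S c x = c • x := by
  rw [part_one'] at hx
  have h1 : Submodule.linearProjOfIsCompl S.even S.odd S.isCompl x = 0 :=
    Submodule.linearProjOfIsCompl_apply_right S.isCompl ⟨x, hx⟩
  have h2 : Submodule.linearProjOfIsCompl S.odd S.even S.isCompl.symm x = ⟨x, hx⟩ :=
    Submodule.linearProjOfIsCompl_apply_left S.isCompl.symm ⟨x, hx⟩
  simp [twist, h1, h2]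

/-- extension from homogeneous elements, linear version -/
lemma ext1 {W : Type*} [AddCommGroup W] [Module k W] (f g : V →ₗ[k] W)
    (h : ∀ (a : ZMod 2) x, x ∈ S.part a → f x = g x) : f = g := by
  ext x
  obtain ⟨x0, x1, h0, h1, rfl⟩ := decomp S x
  simp only [map_add]
  rw [h 0 x0 h0, h 1 x1 h1]

lemma tw_sg_part (p : ZMod 2) {r : ZMod 2} {x : V} (hx : x ∈ S.part r) :
    twist S (sg k p) x = sg k (p * r) • x := by
  rcases zmod2_cases r with h | h <;> subst h
  · rw [tw_part0 S _ hx, mul_zero, sg_zero, one_smul]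
  · rw [tw_part1 S _ hx, mul_one]

lemma tw_part_mem (c : k) {r : ZMod 2} {x : V} (hx : x ∈ S.part r) :
    twist S c x ∈ S.part r := by
  rcases zmod2_cases r with h | h <;> subst h
  · rw [tw_part0 S _ hx]; exact hx
  · rw [tw_part1 S _ hx]; exact Submodule.smul_mem _ _ hx

lemma eps_eps : twist S (-1) ∘ₗ twist S (-1) = LinearMap.id := by
  apply ext1 S
  intro a x hx
  rcases zmod2_cases a with h | h <;> subst h
  · simp only [LinearMap.comp_apply, LinearMap.id_apply]
    rw [tw_part0 S _ hx, tw_part0 S _ hx]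
  · simp only [LinearMap.comp_apply, LinearMap.id_apply]
    rw [tw_part1 S _ hx]
    rw [map_smul, tw_part1 S _ hx, smul_smul]
    norm_num

/-- a twist commutes with any even operator -/
lemma tw_comm (c : k) (A : Module.End k V) (hA : ∀ (r : ZMod 2) x, x ∈ S.part r → A x ∈ S.part r) :
    twist S c ∘ₗ A = A ∘ₗ twist S c := by
  apply ext1 S
  intro a x hx
  rcases zmod2_cases a with h | h <;> subst h
  · simp only [LinearMap.comp_apply]
    rw [tw_part0 S _ hx, tw_part0 S _ (hA 0 x hx)]
  · simp only [LinearMap.comp_apply]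
    rw [tw_part1 S _ hx, map_smul, tw_part1 S _ (hA 1 x hx)]

lemma tw_one : twist S 1 = LinearMap.id := by
  apply ext1 S
  intro a x hx
  rcases zmod2_cases a with h | h <;> subst h
  · rw [LinearMap.id_apply, tw_part0 S _ hx]
  · rw [LinearMap.id_apply, tw_part1 S _ hx, one_smul]

end Infra
section Str
variable {k V : Type*} [Field k] [AddCommGroup V] [Module k V]


variable (S : SuperSpace k V)

lemma proj_even_eps :
    (Submodule.linearProjOfIsCompl S.even S.odd S.isCompl) ∘ₗ twist S (-1)
      = Submodule.linearProjOfIsCompl S.even S.odd S.isCompl := by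
  ext x
  obtain ⟨a, b, ha, hb, rfl⟩ := decomp S x
  have hta : twist S (-1) a = a := tw_part0 S _ ha
  have htb : twist S (-1) b = (-1 : k) • b := tw_part1 S _ hb
  rw [part_one'] at hb
  have hpb : Submodule.linearProjOfIsCompl S.even S.odd S.isCompl b = 0 :=
    Submodule.linearProjOfIsCompl_apply_right S.isCompl ⟨b, hb⟩
  simp [hta, htb, hpb, map_smul]

lemma proj_odd_eps :
    (Submodule.linearProjOfIsCompl S.odd S.even S.isCompl.symm) ∘ₗ twist S (-1)
      = -(Submodule.linearProjOfIsCompl S.odd S.even S.isCompl.symm) := by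
  ext x
  obtain ⟨a, b, ha, hb, rfl⟩ := decomp S x
  have hta : twist S (-1) a = a := tw_part0 S _ ha
  have htb : twist S (-1) b = (-1 : k) • b := tw_part1 S _ hb
  rw [part_zero'] at ha
  have hpa : Submodule.linearProjOfIsCompl S.odd S.even S.isCompl.symm a = 0 :=
    Submodule.linearProjOfIsCompl_apply_right S.isCompl.symm ⟨a, ha⟩
  simp [hta, htb, hpa, map_smul]

lemma strE_eq [FiniteDimensional k V] (A : Module.End k V) :
    strE S A = LinearMap.trace k V (twist S (-1) ∘ₗ A) := by
  set pe := Submodule.linearProjOfIsCompl S.even S.odd S.isCompl with hpe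
  set po := Submodule.linearProjOfIsCompl S.odd S.even S.isCompl.symm with hpo
  have hid : (S.even.subtype ∘ₗ pe) + (S.odd.subtype ∘ₗ po) = LinearMap.id := by
    ext x
    exact Submodule.projection_add_projection_eq_self S.isCompl x
  have h0 : twist S (-1) ∘ₗ A = ((twist S (-1) ∘ₗ A ∘ₗ S.even.subtype) ∘ₗ pe)
      + ((twist S (-1) ∘ₗ A ∘ₗ S.odd.subtype) ∘ₗ po) := by
    conv_lhs => rw [show twist S (-1) ∘ₗ A = (twist S (-1) ∘ₗ A) ∘ₗ LinearMap.id from rfl]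
    rw [← hid, LinearMap.comp_add]
    simp only [LinearMap.comp_assoc]
  rw [h0, map_add]
  rw [LinearMap.trace_comp_comm' pe (twist S (-1) ∘ₗ A ∘ₗ S.even.subtype)]
  rw [LinearMap.trace_comp_comm' po (twist S (-1) ∘ₗ A ∘ₗ S.odd.subtype)]
  have h1 : pe ∘ₗ twist S (-1) ∘ₗ A ∘ₗ S.even.subtype = pe ∘ₗ A ∘ₗ S.even.subtype := by
    rw [← LinearMap.comp_assoc, hpe, proj_even_eps]
  have h2 : po ∘ₗ twist S (-1) ∘ₗ A ∘ₗ S.odd.subtype = -(po ∘ₗ A ∘ₗ S.odd.subtype) := by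
    rw [← LinearMap.comp_assoc, hpo, proj_odd_eps]
    rfl
  rw [h1, h2, map_neg, strE]
  ring

lemma strE_odd [FiniteDimensional k V] (A : Module.End k V)
    (hA : ∀ (r : ZMod 2) x, x ∈ S.part r → A x ∈ S.part (r + 1)) : strE S A = 0 := by
  have k1 : S.part ((0:ZMod 2) + 1) = S.odd := by
    rw [show ((0:ZMod 2) + 1) = 1 from by decide]; exact part_one' S
  have k2 : S.part ((1:ZMod 2) + 1) = S.even := by
    rw [show ((1:ZMod 2) + 1) = 0 from by decide]; exact part_zero' S
  have h1 : (Submodule.linearProjOfIsCompl S.even S.odd S.isCompl) ∘ₗ A ∘ₗ S.even.subtype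
      = 0 := by
    ext x
    have hx : (x : V) ∈ S.part 0 := by rw [part_zero']; exact x.2
    have hm := hA 0 x hx
    rw [k1] at hm
    have hz : Submodule.linearProjOfIsCompl S.even S.odd S.isCompl (A (x : V)) = 0 :=
      Submodule.linearProjOfIsCompl_apply_right S.isCompl ⟨A (x : V), hm⟩
    simp [LinearMap.comp_apply, hz]
  have h2 : (Submodule.linearProjOfIsCompl S.odd S.even S.isCompl.symm) ∘ₗ A ∘ₗ S.odd.subtype
      = 0 := by
    ext x
    have hx : (x : V) ∈ S.part 1 := by rw [part_one']; exact x.2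
    have hm := hA 1 x hx
    rw [k2] at hm
    have hz : Submodule.linearProjOfIsCompl S.odd S.even S.isCompl.symm (A (x : V)) = 0 :=
      Submodule.linearProjOfIsCompl_apply_right S.isCompl.symm ⟨A (x : V), hm⟩
    simp [LinearMap.comp_apply, hz]
  rw [strE, h1, h2]
  simp

end Str
section Compat
variable {k V : Type*} [Field k] [AddCommGroup V] [Module k V]
variable (S : SuperSpace k V) (B : V →ₗ[k] V →ₗ[k] k) (J : Module.End k V)
variable (R : V →ₗ[k] V →ₗ[k] Module.End k V)

lemma Bz (hBeven : (∀ x ∈ S.even, ∀ y ∈ S.odd, B x y = 0) ∧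
      (∀ x ∈ S.odd, ∀ y ∈ S.even, B x y = 0))
    {a b : ZMod 2} {x y : V} (hx : x ∈ S.part a) (hy : y ∈ S.part b) (hab : a ≠ b) :
    B x y = 0 := by
  rcases zmod2_cases a with h | h <;> rcases zmod2_cases b with h' | h' <;>
    subst h <;> subst h'
  · exact absurd rfl hab
  · exact hBeven.1 x (by rwa [part_zero'] at hx) y (by rwa [part_one'] at hy)
  · exact hBeven.2 x (by rwa [part_one'] at hx) y (by rwa [part_zero'] at hy)
  · exact absurd rfl hab

lemma absorb (hBeven : (∀ x ∈ S.even, ∀ y ∈ S.odd, B x y = 0) ∧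
      (∀ x ∈ S.odd, ∀ y ∈ S.even, B x y = 0))
    {a b : ZMod 2} {w x : V} (hw : w ∈ S.part b) (hx : x ∈ S.part a) :
    sg k (a * b) * B w x = B (twist S (-1) w) x := by
  by_cases hab : a = b
  · subst hab
    have h1 : twist S (-1) w = sg k a • w := by
      have := tw_sg_part S 1 hw
      rwa [show sg k (1 : ZMod 2) = (-1 : k) from rfl, one_mul] at this
    rw [h1, map_smul, LinearMap.smul_apply, smul_eq_mul]
    congr 1
    rcases zmod2_cases a with h | h <;> subst h <;> simp
  · have hz : B w x = 0 := Bz S B hBeven hw hx (fun hh => hab hh.symm)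
    have h1 : twist S (-1) w = sg k b • w := by
      have := tw_sg_part S 1 hw
      rwa [show sg k (1 : ZMod 2) = (-1 : k) from rfl, one_mul] at this
    rw [h1, map_smul, LinearMap.smul_apply, smul_eq_mul, hz]
    ring

lemma Jsq_apply (hJ2 : J * J = -1) (v : V) : J (J v) = -v := by
  have := LinearMap.congr_fun hJ2 v
  simpa [Module.End.mul_apply] using this

lemma Jswap (hJ2 : J * J = -1) (hJiso : ∀ x y : V, B (J x) (J y) = B x y) (v u : V) :
    B v (J u) = - B (J v) u := by
  have h1 : B (J (-(J v))) (J u) = B (-(J v)) u := hJiso _ _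
  have h2 : J (-(J v)) = v := by rw [map_neg, Jsq_apply J hJ2, neg_neg]
  rw [h2] at h1
  rw [h1, map_neg, LinearMap.neg_apply]

lemma Jmem (hJh : S.HomEnd 0 J) {r : ZMod 2} {x : V} (hx : x ∈ S.part r) :
    J x ∈ S.part r := by
  have := hJh r x hx
  rwa [add_zero] at this

lemma Rjj (h2 : (2:k) ≠ 0)
    (hsymm : ∀ (p q : ZMod 2) (x y : V), x ∈ S.part p → y ∈ S.part q →
      B x y = sg k (p * q) * B y x)
    (hnd : ∀ x : V, (∀ y, B x y = 0) → x = 0)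
    (hJh : S.HomEnd 0 J) (hJ2 : J * J = -1)
    (hJiso : ∀ x y : V, B (J x) (J y) = B x y)
    (hskew : SuperSkew S R) (hB : Bianchi S R) (hRhom : HomCurv S 0 R)
    (hRu : ∀ (p q : ZMod 2) (x y : V), x ∈ S.part p → y ∈ S.part q →
      R x y * J = J * R x y ∧ ospCond S B (p + q) (R x y))
    {μ ν : ZMod 2} {U W : V} (hU : U ∈ S.part μ) (hW : W ∈ S.part ν) :
    R (J U) (J W) = R U W := by
  have hosp : ∀ (p q : ZMod 2) (x y : V), x ∈ S.part p → y ∈ S.part q →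
      ospCond S B (p + q) (R x y) := fun p q x y hx hy => (hRu p q x y hx hy).2
  have core : ∀ (γ δ : ZMod 2) (c d : V), c ∈ S.part γ → d ∈ S.part δ →
      B (R (J U) (J W) c) d = B (R U W c) d := by
    intro γ δ c d hc hd
    have p1 := pair_symm S B R h2 hsymm hskew hB hRhom hosp μ ν γ δ (J U) (J W) c d
      (Jmem S J hJh hU) (Jmem S J hJh hW) hc hd
    have hcomm : R c d (J U) = J (R c d U) := by
      have := LinearMap.congr_fun (hRu γ δ c d hc hd).1 U
      simpa [Module.End.mul_apply] using this
    have p2 := pair_symm S B R h2 hsymm hskew hB hRhom hosp γ δ μ ν c d U W hc hd hU hW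
    have ze : ((μ + ν) * (γ + δ)) + ((γ + δ) * (μ + ν)) = 0 :=
      (by decide : ∀ a b : ZMod 2, a * b + b * a = 0) (μ + ν) (γ + δ)
    rw [p1, hcomm, hJiso, p2, ← mul_assoc, sg_mul, ze, sg_zero, one_mul]
  have hptwise : ∀ (γ : ZMod 2) (c : V), c ∈ S.part γ → R (J U) (J W) c = R U W c := by
    intro γ c hc
    have hdiff : ∀ d : V, B (R (J U) (J W) c - R U W c) d = 0 := by
      intro d
      obtain ⟨d0, d1, hd0, hd1, rfl⟩ := decomp S d
      rw [map_sub]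
      simp only [LinearMap.sub_apply, map_add]
      rw [core γ 0 c d0 hc hd0, core γ 1 c d1 hc hd1]
      ring
    have := hnd _ hdiff
    exact sub_eq_zero.mp this
  exact ext1 S _ _ hptwise

end Compat

section Diamond
variable {k V : Type*} [Field k] [AddCommGroup V] [Module k V]
variable (S : SuperSpace k V) (B : V →ₗ[k] V →ₗ[k] k) (J : Module.End k V)
variable (R : V →ₗ[k] V →ₗ[k] Module.End k V)

lemma Jswap2 (hJ2 : J * J = -1) (hJiso : ∀ x y : V, B (J x) (J y) = B x y) (u w : V) :
    B (J u) w = - B u (J w) := by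
  have ha : J (-(J w)) = w := by rw [map_neg, Jsq_apply J hJ2, neg_neg]
  have h1 : B (J u) (J (-(J w))) = B u (-(J w)) := hJiso _ _
  rw [ha] at h1
  rw [h1, map_neg]

lemma diamond (h2 : (2:k) ≠ 0)
    (hsymm : ∀ (p q : ZMod 2) (x y : V), x ∈ S.part p → y ∈ S.part q →
      B x y = sg k (p * q) * B y x)
    (hBeven : (∀ x ∈ S.even, ∀ y ∈ S.odd, B x y = 0) ∧
      (∀ x ∈ S.odd, ∀ y ∈ S.even, B x y = 0))
    (hJh : S.HomEnd 0 J) (hJ2 : J * J = -1)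
    (hJiso : ∀ x y : V, B (J x) (J y) = B x y)
    (hskew : SuperSkew S R) (hB : Bianchi S R) (hRhom : HomCurv S 0 R)
    (hRu : ∀ (a b : ZMod 2) (x y : V), x ∈ S.part a → y ∈ S.part b →
      R x y * J = J * R x y ∧ ospCond S B (a + b) (R x y))
    (p q q' : ZMod 2) (Yp Zp X X' : V)
    (hY : Yp ∈ S.part p) (hZ : Zp ∈ S.part p) (hX : X ∈ S.part q) (hX' : X' ∈ S.part q') :
    B (J (R Yp Zp X)) X'
      = B (twist S (-1) (R Yp (J (twist S (sg k p) X')) Zp)) X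
        + B (J (R Yp (twist S (sg k p) X) Zp)) X' := by
  have hosp : ∀ (a b : ZMod 2) (x y : V), x ∈ S.part a → y ∈ S.part b →
      ospCond S B (a + b) (R x y) := fun a b x y hx hy => (hRu a b x y hx hy).2
  have hJX' : J X' ∈ S.part q' := Jmem S J hJh hX'
  have e_hb := HB' S B R hB q q' p X (J X') Yp hX hJX' hY Zp
  -- t0 : first Bianchi term
  have t0 : B (R X (J X') Yp) Zp = - B (J (R Yp Zp X)) X' := by
    have ps := pair_symm S B R h2 hsymm hskew hB hRhom hosp q q' p p X (J X') Yp Zp hX hJX' hY hZ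
    have ze : ((q + q') * (p + p) : ZMod 2) = 0 :=
      (by decide : ∀ a b c : ZMod 2, (a + b) * (c + c) = 0) q q' p
    rw [ze, sg_zero, one_mul] at ps
    rw [Jswap B J hJ2 hJiso (R Yp Zp X) X'] at ps
    exact ps
  -- t1 : second Bianchi term
  have t1 : B (R (J X') Yp X) Zp = sg k (p * q + p * q') * B (R Yp (J X') Zp) X := by
    have o1 := (hRu q' p (J X') Yp hJX' hY).2 q X Zp hX
    have sk : R (J X') Yp Zp = -(sg k (q' * p) • R Yp (J X') Zp) := by
      have hh := hskew q' p (J X') Yp hJX' hY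
      have := LinearMap.congr_fun hh Zp
      simpa [LinearMap.smul_apply, LinearMap.neg_apply] using this
    have hsy := hsymm q (p + (0 + p + q')) X (R Yp (J X') Zp) hX
      (hRhom p q' Yp (J X') hY hJX' p Zp hZ)
    rw [sk, map_neg, map_smul, smul_eq_mul, hsy] at o1
    have em : sg k ((q' + p) * q) * (sg k (q' * p) * sg k (q * (p + (0 + p + q'))))
        = sg k (p * q + p * q') := by
      rw [sg_mul, sg_mul,
        (by decide : ∀ p q q' : ZMod 2,
          (q' + p) * q + (q' * p + q * (p + (0 + p + q'))) = p * q + p * q') p q q']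
    linear_combination o1 + (B (R Yp (J X') Zp) X) * em
  -- t2 : third Bianchi term
  have t2 : B (R Yp X (J X')) Zp = sg k (p * q') * B (J (R Yp X Zp)) X' := by
    have o2 := (hRu p q Yp X hY hX).2 q' (J X') Zp hJX'
    have jw : B (J X') (R Yp X Zp) = - B X' (J (R Yp X Zp)) :=
      Jswap2 B J hJ2 hJiso X' (R Yp X Zp)
    have hsy2 := hsymm q' (p + (0 + p + q)) X' (J (R Yp X Zp)) hX'
      (Jmem S J hJh (hRhom p q Yp X hY hX p Zp hZ))
    rw [jw, hsy2] at o2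
    have em : sg k ((p + q) * q') * sg k (q' * (p + (0 + p + q))) = sg k (p * q') := by
      rw [sg_mul,
        (by decide : ∀ p q q' : ZMod 2,
          (p + q) * q' + q' * (p + (0 + p + q)) = p * q') p q q']
    linear_combination o2 + (B (J (R Yp X Zp)) X') * em
  -- main identity
  have cA : sg k (q * (q' + p)) * sg k (p * q + p * q') = sg k (q * q' + p * q') := by
    rw [sg_mul,
      (by decide : ∀ p q q' : ZMod 2,
        q * (q' + p) + (p * q + p * q') = q * q' + p * q') p q q']
  have cB : sg k (p * (q + q')) * sg k (p * q') = sg k (p * q) := by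
    rw [sg_mul,
      (by decide : ∀ p q q' : ZMod 2, p * (q + q') + p * q' = p * q) p q q']
  have main : B (J (R Yp Zp X)) X'
      = sg k (q * q' + p * q') * B (R Yp (J X') Zp) X
        + sg k (p * q) * B (J (R Yp X Zp)) X' := by
    linear_combination (-1 : k) * e_hb + t0 + sg k (q * (q' + p)) * t1
      + sg k (p * (q + q')) * t2 + (B (R Yp (J X') Zp) X) * cA
      + (B (J (R Yp X Zp)) X') * cB
  -- rewrite the right-hand side into twist form
  have hw1 : R Yp (J (twist S (sg k p) X')) Zp = sg k (p * q') • (R Yp (J X') Zp) := by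
    rw [tw_sg_part S p hX', map_smul, map_smul]
    rfl
  have hw2 : R Yp (twist S (sg k p) X) Zp = sg k (p * q) • (R Yp X Zp) := by
    rw [tw_sg_part S p hX, map_smul]
    rfl
  have g1 : B (twist S (-1) (R Yp (J (twist S (sg k p) X')) Zp)) X
      = sg k (p * q') * B (twist S (-1) (R Yp (J X') Zp)) X := by
    rw [hw1, map_smul, map_smul, LinearMap.smul_apply, smul_eq_mul]
  have g2 : B (J (R Yp (twist S (sg k p) X) Zp)) X'
      = sg k (p * q) * B (J (R Yp X Zp)) X' := by
    rw [hw2, map_smul, map_smul, LinearMap.smul_apply, smul_eq_mul]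
  have habs : sg k (q * q') * B (R Yp (J X') Zp) X
      = B (twist S (-1) (R Yp (J X') Zp)) X := by
    have ha := absorb S B hBeven (hRhom p q' Yp (J X') hY hJX' p Zp hZ) hX
    rwa [(by decide : ∀ p q q' : ZMod 2, q * (p + (0 + p + q')) = q * q') p q q'] at ha
  have m1 : sg k (p * q') * sg k (q * q') = sg k (q * q' + p * q') := by
    rw [sg_mul,
      (by decide : ∀ p q q' : ZMod 2, p * q' + q * q' = q * q' + p * q') p q q']
  rw [g1, g2, ← habs]
  linear_combination main - (B (R Yp (J X') Zp) X) * m1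
end Diamond
section MainAux
variable {k V : Type*} [Field k] [AddCommGroup V] [Module k V]
variable (S : SuperSpace k V) (B : V →ₗ[k] V →ₗ[k] k)

lemma eps_part {a : ZMod 2} {x : V} (hx : x ∈ S.part a) :
    twist S (-1) x = sg k a • x := by
  have := tw_sg_part S 1 hx
  rwa [show sg k (1 : ZMod 2) = (-1 : k) from rfl, one_mul] at this

lemma extME (M E : Module.End k V)
    (h : ∀ (a b : ZMod 2) x y, x ∈ S.part a → y ∈ S.part b → B (M x) y = B (E y) x) :
    ∀ x y, B (M x) y = B (E y) x := by
  intro x y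
  obtain ⟨x0, x1, hx0, hx1, rfl⟩ := decomp S x
  obtain ⟨y0, y1, hy0, hy1, rfl⟩ := decomp S y
  simp only [map_add, LinearMap.add_apply]
  rw [h 0 0 x0 y0 hx0 hy0, h 0 1 x0 y1 hx0 hy1, h 1 0 x1 y0 hx1 hy0, h 1 1 x1 y1 hx1 hy1]
  try ring

lemma extME2 (M E : Module.End k V)
    (h : ∀ (a b : ZMod 2) x y, x ∈ S.part a → y ∈ S.part b → B (M x) y = B x (E y)) :
    ∀ x y, B (M x) y = B x (E y) := by
  intro x y
  obtain ⟨x0, x1, hx0, hx1, rfl⟩ := decomp S x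
  obtain ⟨y0, y1, hy0, hy1, rfl⟩ := decomp S y
  simp only [map_add, LinearMap.add_apply]
  rw [h 0 0 x0 y0 hx0 hy0, h 0 1 x0 y1 hx0 hy1, h 1 0 x1 y0 hx1 hy0, h 1 1 x1 y1 hx1 hy1]
  try ring

lemma Beps2 (hBeven : (∀ x ∈ S.even, ∀ y ∈ S.odd, B x y = 0) ∧
      (∀ x ∈ S.odd, ∀ y ∈ S.even, B x y = 0)) :
    ∀ x y, B (twist S (-1) x) y = B x (twist S (-1) y) := by
  apply extME2 S B
  intro a b x y hx hy
  rw [eps_part S hx, eps_part S hy]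
  simp only [map_smul, LinearMap.smul_apply, smul_eq_mul]
  by_cases hab : a = b
  · rw [hab]
  · rw [Bz S B hBeven hx hy hab]
    ring

lemma Beps1
    (hsymm : ∀ (p q : ZMod 2) (x y : V), x ∈ S.part p → y ∈ S.part q →
      B x y = sg k (p * q) * B y x)
    (hBeven : (∀ x ∈ S.even, ∀ y ∈ S.odd, B x y = 0) ∧
      (∀ x ∈ S.odd, ∀ y ∈ S.even, B x y = 0)) :
    ∀ x y, B y x = B (twist S (-1) x) y := by
  have h := extME S B (twist S (-1)) 1 ?_
  · intro x y
    have := h x y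
    simpa using this.symm
  · intro a b x y hx hy
    rw [eps_part S hx, map_smul, LinearMap.smul_apply, smul_eq_mul, Module.End.one_apply]
    by_cases hab : a = b
    · subst hab
      rw [hsymm a a y x hy hx, (by decide : ∀ a : ZMod 2, a * a = a) a]
    · rw [Bz S B hBeven hx hy hab, Bz S B hBeven hy hx (fun hh => hab hh.symm)]
      ring
end MainAux

/-- in the Kähler super setting, for an even algebraic curvature tensor `R`
of type `u = {ξ ∈ osp(V,g) : [ξ,J] = 0}`, the Ricci tensor
`Ric(R)(Y,Z) = str(X ↦ (−1)^{|X||Z|} R(Y,X)Z)` satisfies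
`Ric(R)(Y,Z) = (1/2) str(J ∘ R(JY,Z))` for homogeneous `Y`, `Z`. -/
theorem ricci_formula_kahler {k V : Type*} [Field k] [AddCommGroup V] [Module k V]
    [FiniteDimensional k V] (h2 : (2 : k) ≠ 0)
    (S : SuperSpace k V) (B : V →ₗ[k] V →ₗ[k] k)
    (hsymm : ∀ (p q : ZMod 2) (x y : V), x ∈ S.part p → y ∈ S.part q →
      B x y = sg k (p * q) * B y x)
    (hBeven : (∀ x ∈ S.even, ∀ y ∈ S.odd, B x y = 0) ∧
      (∀ x ∈ S.odd, ∀ y ∈ S.even, B x y = 0))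
    (hnd : ∀ x : V, (∀ y, B x y = 0) → x = 0)
    (J : Module.End k V) (hJh : S.HomEnd 0 J) (hJ2 : J * J = -1)
    (hJiso : ∀ x y : V, B (J x) (J y) = B x y)
    (R : V →ₗ[k] V →ₗ[k] Module.End k V)
    (hskew : SuperSkew S R) (hB : Bianchi S R) (hRhom : HomCurv S 0 R)
    (hRu : ∀ (p q : ZMod 2) (x y : V), x ∈ S.part p → y ∈ S.part q →
      R x y * J = J * R x y ∧ ospCond S B (p + q) (R x y)) :
    ∀ (pY pZ : ZMod 2) (Y Z : V), Y ∈ S.part pY → Z ∈ S.part pZ →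
      strE S (((R Y).flip Z) ∘ₗ twist S (sg k pZ))
        = 2⁻¹ * strE S (J * R (J Y) Z) := by
  intro pY pZ Y Z hY hZ
  by_cases hpar : pY = pZ
  case neg =>
    have hpz : pZ = pY + 1 := by
      rcases zmod2_cases pY with h | h <;> rcases zmod2_cases pZ with h' | h' <;>
        subst h <;> subst h' <;> first | rfl | decide | exact absurd rfl hpar
    subst hpz
    have hL : strE S (((R Y).flip Z) ∘ₗ twist S (sg k (pY + 1))) = 0 := by
      apply strE_odd
      intro r x hx
      have htw : twist S (sg k (pY + 1)) x ∈ S.part r := tw_part_mem S _ hx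
      have h1 := hRhom pY r Y (twist S (sg k (pY + 1)) x) hY htw (pY + 1) Z hZ
      rw [(by decide : ∀ p r : ZMod 2, (p + 1) + (0 + p + r) = r + 1) pY r] at h1
      simpa only [LinearMap.comp_apply, LinearMap.flip_apply] using h1
    have hR : strE S (J * R (J Y) Z) = 0 := by
      apply strE_odd
      intro r x hx
      have h1 := hRhom pY (pY + 1) (J Y) Z (Jmem S J hJh hY) hZ r x hx
      rw [(by decide : ∀ p r : ZMod 2, r + (0 + p + (p + 1)) = r + 1) pY r] at h1
      have h2' := Jmem S J hJh h1
      simpa only [Module.End.mul_apply] using h2'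
    rw [hL, hR]
    ring
  case pos =>
    subst hpar
    have hYp : J Y ∈ S.part pY := Jmem S J hJh hY
    have hRJ : (R (J Y)) ∘ₗ J = R Y := by
      apply ext1 S
      intro a x hx
      simp only [LinearMap.comp_apply]
      exact Rjj S B J R h2 hsymm hnd hJh hJ2 hJiso hskew hB hRhom hRu hY hx
    have hFJ : ((R (J Y)).flip Z : Module.End k V) * J = (R Y).flip Z := by
      ext x
      simp only [Module.End.mul_apply, LinearMap.flip_apply]
      have hh := LinearMap.congr_fun hRJ x
      simp only [LinearMap.comp_apply] at hh
      rw [hh]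
    have hFneg : ((R (J Y)).flip Z : Module.End k V)
        = -((((R Y).flip Z) : Module.End k V) * J) := by
      have e1 : ((R (J Y)).flip Z : Module.End k V) * (J * J)
          = (((R (J Y)).flip Z : Module.End k V) * J) * J := by noncomm_ring
      rw [hJ2, hFJ, mul_neg_one] at e1
      linear_combination (norm := noncomm_ring) -e1
    have hJEp : J * twist S (sg k pY) = twist S (sg k pY) * J :=
      (tw_comm S (sg k pY) J (fun r x hx => Jmem S J hJh hx)).symm
    have hJeps : J * twist S (-1) = twist S (-1) * J :=
      (tw_comm S (-1) J (fun r x hx => Jmem S J hJh hx)).symm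
    have hME : ∀ x y, B (((J * (R (J Y) Z) - J * ((R (J Y)).flip Z) * twist S (sg k pY))
          * twist S (-1)) x) y
        = B (((((R (J Y)).flip Z) : Module.End k V) * J * twist S (sg k pY)) y) x := by
      apply extME S B
      intro a b x y hx hy
      have hd := diamond S B J R h2 hsymm hBeven hJh hJ2 hJiso hskew hB hRhom hRu
        pY a b (J Y) Z x y hYp hZ hx hy
      have hex : twist S (-1) x = sg k a • x := eps_part S hx
      have e2 : B (twist S (-1) (R (J Y) (J (twist S (sg k pY) y)) Z)) x
          = sg k a * B (R (J Y) (J (twist S (sg k pY) y)) Z) x := by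
        rw [Beps2 S B hBeven, hex, map_smul, smul_eq_mul]
      have sq : sg k a * sg k a = 1 := sg_sq a
      simp only [Module.End.mul_apply, LinearMap.sub_apply, LinearMap.flip_apply, hex,
        map_smul, LinearMap.smul_apply, smul_eq_mul, map_sub]
      linear_combination sg k a * hd + sg k a * e2
        + (B (R (J Y) (J (twist S (sg k pY) y)) Z) x) * sq
    have bridge := trace_bridge B hnd (twist S (-1))
      ((J * (R (J Y) Z) - J * ((R (J Y)).flip Z) * twist S (sg k pY)) * twist S (-1))
      ((((R (J Y)).flip Z) : Module.End k V) * J * twist S (sg k pY))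
      (Beps1 S B hsymm hBeven) (Beps2 S B hBeven) hME
    have hMsplit : (J * (R (J Y) Z) - J * ((R (J Y)).flip Z) * twist S (sg k pY))
          * twist S (-1)
        = J * (R (J Y) Z) * twist S (-1)
          - J * ((R (J Y)).flip Z) * twist S (sg k pY) * twist S (-1) := by
      noncomm_ring
    have c1 : LinearMap.trace k V (J * (R (J Y) Z) * twist S (-1))
        = LinearMap.trace k V (twist S (-1) * (J * R (J Y) Z)) :=
      LinearMap.trace_mul_comm k (J * (R (J Y) Z)) (twist S (-1))
    have c2 : LinearMap.trace k V
          (J * ((R (J Y)).flip Z) * twist S (sg k pY) * twist S (-1))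
        = LinearMap.trace k V (twist S (-1)
            * ((((R Y).flip Z) : Module.End k V) * twist S (sg k pY))) := by
      have e1 : J * (((R (J Y)).flip Z) : Module.End k V) * twist S (sg k pY) * twist S (-1)
          = -(J * (((((R Y).flip Z) : Module.End k V)) * J) * twist S (sg k pY)
              * twist S (-1)) := by
        rw [hFneg]; noncomm_ring
      have e2 : J * (((((R Y).flip Z) : Module.End k V)) * J) * twist S (sg k pY)
            * twist S (-1)
          = (J * (((R Y).flip Z) : Module.End k V) * twist S (sg k pY) * twist S (-1)) * J := by
        calc J * (((((R Y).flip Z) : Module.End k V)) * J) * twist S (sg k pY) * twist S (-1)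
            = J * (((R Y).flip Z) : Module.End k V) * (J * twist S (sg k pY))
              * twist S (-1) := by noncomm_ring
          _ = J * (((R Y).flip Z) : Module.End k V) * (twist S (sg k pY) * J)
              * twist S (-1) := by rw [hJEp]
          _ = J * (((R Y).flip Z) : Module.End k V) * twist S (sg k pY)
              * (J * twist S (-1)) := by noncomm_ring
          _ = J * (((R Y).flip Z) : Module.End k V) * twist S (sg k pY)
              * (twist S (-1) * J) := by rw [hJeps]
          _ = (J * (((R Y).flip Z) : Module.End k V) * twist S (sg k pY)
              * twist S (-1)) * J := by noncomm_ring
      have e3 : LinearMap.trace k V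
            ((J * (((R Y).flip Z) : Module.End k V) * twist S (sg k pY) * twist S (-1)) * J)
          = LinearMap.trace k V (-((((R Y).flip Z) : Module.End k V) * twist S (sg k pY)
              * twist S (-1))) := by
        rw [LinearMap.trace_mul_comm]
        congr 1
        calc J * (J * (((R Y).flip Z) : Module.End k V) * twist S (sg k pY) * twist S (-1))
            = (J * J) * ((((R Y).flip Z) : Module.End k V) * twist S (sg k pY)
                * twist S (-1)) := by noncomm_ring
          _ = -((((R Y).flip Z) : Module.End k V) * twist S (sg k pY) * twist S (-1)) := by
              rw [hJ2]; noncomm_ring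
      calc LinearMap.trace k V
            (J * (((R (J Y)).flip Z) : Module.End k V) * twist S (sg k pY) * twist S (-1))
          = LinearMap.trace k V
            (-(J * (((((R Y).flip Z) : Module.End k V)) * J) * twist S (sg k pY)
              * twist S (-1))) := by rw [e1]
        _ = -(LinearMap.trace k V
            ((J * (((R Y).flip Z) : Module.End k V) * twist S (sg k pY) * twist S (-1))
              * J)) := by rw [map_neg, e2]
        _ = -(LinearMap.trace k V (-((((R Y).flip Z) : Module.End k V) * twist S (sg k pY)
              * twist S (-1)))) := by rw [e3]
        _ = LinearMap.trace k V ((((R Y).flip Z) : Module.End k V) * twist S (sg k pY)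
              * twist S (-1)) := by rw [map_neg, neg_neg]
        _ = LinearMap.trace k V (((((R Y).flip Z) : Module.End k V) * twist S (sg k pY))
              * twist S (-1)) := by noncomm_ring
        _ = LinearMap.trace k V (twist S (-1)
              * ((((R Y).flip Z) : Module.End k V) * twist S (sg k pY))) :=
            LinearMap.trace_mul_comm k _ _
    have c3 : LinearMap.trace k V (twist S (-1)
          ∘ₗ ((((R (J Y)).flip Z) : Module.End k V) * J * twist S (sg k pY)))
        = LinearMap.trace k V (twist S (-1)
            * ((((R Y).flip Z) : Module.End k V) * twist S (sg k pY))) := by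
      have : twist S (-1)
            ∘ₗ ((((R (J Y)).flip Z) : Module.End k V) * J * twist S (sg k pY))
          = twist S (-1)
            * ((((R (J Y)).flip Z) : Module.End k V) * J * twist S (sg k pY)) := rfl
      rw [this, hFJ]
    rw [hMsplit, map_sub, c1, c2, c3] at bridge
    rw [strE_eq, strE_eq]
    have d1 : twist S (-1) ∘ₗ (((R Y).flip Z) ∘ₗ twist S (sg k pY))
        = twist S (-1) * ((((R Y).flip Z) : Module.End k V) * twist S (sg k pY)) := rfl
    have d2 : twist S (-1) ∘ₗ (J * R (J Y) Z)
        = twist S (-1) * (J * R (J Y) Z) := rfl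
    rw [d1, d2]
    have hU : LinearMap.trace k V (twist S (-1) * (J * R (J Y) Z))
        = 2 * LinearMap.trace k V (twist S (-1)
            * ((((R Y).flip Z) : Module.End k V) * twist S (sg k pY))) := by
      linear_combination bridge
    rw [hU, ← mul_assoc (2⁻¹ : k) 2, inv_mul_cancel₀ h2, one_mul]
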